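/- arXiv:math/0601401 — 3 statements merged into one kernel-verified Lean document; each statement's English description precedes it below -/
import Mathlib

section
/- Let K be a finite extension of ℚ_p. The natural homomorphism from K^× to the inverse limit K̂^× = lim_n K^×/(K^×)^n (over positive integers n ordered by divisibility), sending x to the compatible family of its classes modulo n-th powers, is injective. -/
/-- The subgroup of `n`-th powers of a commutative group `G`. -/
def powSubgroup (G : Type*) [CommGroup G] (n : ℕ) : Subgroup G :=
  (powMonoidHom n : G →* G).range

lemma powSubgroup_le (G : Type*) [CommGroup G] {m n : ℕ} (h : m ∣ n) :
    powSubgroup G n ≤ powSubgroup G m := by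
  rintro x ⟨y, rfl⟩
  obtain ⟨k, rfl⟩ := h
  exact ⟨y ^ k, by simp [powMonoidHom_apply, ← pow_mul, Nat.mul_comm k m]⟩

/-- For `m ∣ n`, the transition map `G/Gⁿ → G/Gᵐ` induced by the identity of `G`. -/
def powTransition (G : Type*) [CommGroup G] {m n : ℕ} (h : m ∣ n) :
    (G ⧸ powSubgroup G n) →* (G ⧸ powSubgroup G m) :=
  QuotientGroup.map _ _ (MonoidHom.id G) (fun x hx => powSubgroup_le G h hx)

/-- The inverse limit `Â = lim_n A/Aⁿ` over positive integers ordered by divisibility,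
realized as a subgroup of the product of the quotients. -/
def hatGroup (G : Type*) [CommGroup G] : Subgroup (Π n : ℕ+, G ⧸ powSubgroup G (n : ℕ)) where
  carrier := { f | ∀ (m n : ℕ+) (h : (m : ℕ) ∣ (n : ℕ)), powTransition G h (f n) = f m }
  one_mem' := by
    intro m n h
    simp only [Pi.one_apply, map_one]
  mul_mem' := by
    intro a b ha hb m n h
    simp only [Pi.mul_apply, map_mul, ha m n h, hb m n h]
  inv_mem' := by
    intro a ha m n h
    simp only [Pi.inv_apply, map_inv, ha m n h]

/-- The natural map `G → Ĝ = lim_n G/Gⁿ` sending `x` to the compatible family of its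
classes modulo `n`-th powers. -/
def toHatGroup (G : Type*) [CommGroup G] : G →* hatGroup G where
  toFun x := ⟨fun _ => QuotientGroup.mk x, fun m n h => by
    simp [powTransition, QuotientGroup.map_mk]; rfl⟩
  map_one' := by
    apply Subtype.ext
    funext n
    simp
  map_mul' x y := by
    apply Subtype.ext
    funext n
    rfl

open scoped nonZeroDivisors

open IsDedekindDomain FractionalIdeal

/-- A finitely generated module over `ℤ_[p]`, quotiented by `(p)^k`, is finite. -/
lemma aux_finite_quot {p : ℕ} [Fact p.Prime] (A : Type*) [CommRing A] [Algebra ℤ_[p] A]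
    [Module.Finite ℤ_[p] A] (k : ℕ) :
    Finite (A ⧸ (Ideal.span {(p : A)} ^ k)) := by
  haveI : NeZero (p ^ k) := ⟨pow_ne_zero _ (Fact.out : p.Prime).ne_zero⟩
  obtain ⟨m, s, hs⟩ := Module.Finite.exists_fin (R := ℤ_[p]) (M := A)
  set I : Ideal A := Ideal.span {(p : A)} ^ k with hI
  have hpk : ∀ t : ℤ_[p], algebraMap ℤ_[p] A ((p : ℤ_[p]) ^ k * t) ∈ I := by
    intro t
    rw [_root_.map_mul, _root_.map_pow, map_natCast]
    exact Ideal.mul_mem_right _ _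
      (Ideal.pow_mem_pow (Ideal.subset_span (Set.mem_singleton _)) k)
  have hsurj : Function.Surjective (fun c : Fin m → ZMod (p ^ k) =>
      Ideal.Quotient.mk I (∑ i, (((c i).val : ℤ_[p]) • s i))) := by
    intro z
    obtain ⟨x, rfl⟩ := Ideal.Quotient.mk_surjective z
    have hx : x ∈ Submodule.span ℤ_[p] (Set.range s) := hs ▸ Submodule.mem_top
    obtain ⟨c, rfl⟩ := (Submodule.mem_span_range_iff_exists_fun _).mp hx
    refine ⟨fun i => PadicInt.toZModPow k (c i), ?_⟩
    rw [Ideal.Quotient.eq, ← Finset.sum_sub_distrib]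
    simp_rw [← sub_smul]
    refine Ideal.sum_mem _ (fun i _ => ?_)
    have hker : (((PadicInt.toZModPow k (c i)).val : ℤ_[p]) - c i) ∈
        RingHom.ker (PadicInt.toZModPow k (p := p)) := by
      rw [RingHom.mem_ker, map_sub, map_natCast, ZMod.natCast_val, ZMod.cast_id, sub_self]
    rw [PadicInt.ker_toZModPow, Ideal.mem_span_singleton] at hker
    obtain ⟨t, ht⟩ := hker
    rw [Algebra.smul_def, ht]
    exact Ideal.mul_mem_right _ _ (hpk t)
  exact Finite.of_surjective _ hsurj

set_option maxHeartbeats 1000000 in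
set_option synthInstance.maxHeartbeats 400000 in
/-- Let `K` be a finite extension of `ℚ_p`.  The natural homomorphism
from `Kˣ` to the inverse limit `K̂ˣ = lim_n Kˣ/(Kˣ)ⁿ` (over positive integers ordered by
divisibility), sending `x` to the compatible family of its classes modulo `n`-th powers,
is injective. -/
theorem units_to_hat_injective
    (p : ℕ) [Fact p.Prime] (K : Type*) [Field K] [Algebra ℚ_[p] K]
    [FiniteDimensional ℚ_[p] K] :
    Function.Injective (toHatGroup Kˣ) := by
  classical
  letI : Algebra ℤ_[p] K := ((algebraMap ℚ_[p] K).comp (algebraMap ℤ_[p] ℚ_[p])).toAlgebra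
  haveI : IsScalarTower ℤ_[p] ℚ_[p] K := IsScalarTower.of_algebraMap_eq (fun _ => rfl)
  haveI : CharZero K := charZero_of_injective_algebraMap (algebraMap ℚ_[p] K).injective
  set O : Subalgebra ℤ_[p] K := integralClosure ℤ_[p] K with hO
  haveI : IsFractionRing O K :=
    IsIntegralClosure.isFractionRing_of_finite_extension ℤ_[p] ℚ_[p] K O
  haveI : IsDedekindDomain O := integralClosure.isDedekindDomain ℤ_[p] ℚ_[p] K
  haveI : IsNoetherian ℤ_[p] O := IsIntegralClosure.isNoetherian ℤ_[p] ℚ_[p] K O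
  haveI : Module.Finite ℤ_[p] O := Module.finite_def.mpr (IsNoetherian.noetherian ⊤)
  rw [injective_iff_map_eq_one]
  intro x hx
  -- x is an n-th power for every n
  have key : ∀ n : ℕ, 0 < n → ∃ y : Kˣ, y ^ n = x := by
    intro n hn
    have h1 : ((toHatGroup Kˣ x : hatGroup Kˣ) :
        Π n : ℕ+, Kˣ ⧸ powSubgroup Kˣ (n : ℕ)) ⟨n, hn⟩ = 1 := by rw [hx]; rfl
    obtain ⟨y, hy⟩ := (QuotientGroup.eq_one_iff (x : Kˣ)).mp h1
    exact ⟨y, hy⟩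
  -- all v-adic counts of x vanish
  have hcx : ∀ v : HeightOneSpectrum O,
      count K v (spanSingleton O⁰ ((x : Kˣ) : K)) = 0 := by
    intro v
    set c : ℤ := count K v (spanSingleton O⁰ ((x : Kˣ) : K)) with hc
    have hdvd : ∀ n : ℕ, 0 < n → (n : ℤ) ∣ c := by
      intro n hn
      obtain ⟨y, hy⟩ := key n hn
      rw [hc, ← hy, Units.val_pow_eq_pow_val, ← spanSingleton_pow, count_pow]
      exact dvd_mul_right _ _
    by_contra hc0
    have h1 := Int.le_of_dvd (abs_pos.mpr hc0)
      ((dvd_abs _ _).mpr (hdvd (c.natAbs + 1) (Nat.succ_pos _)))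
    rw [Int.abs_eq_natAbs] at h1
    omega
  -- from vanishing counts, elements come from units of O
  have hmem : ∀ z : Kˣ, (∀ v : HeightOneSpectrum O,
      count K v (spanSingleton O⁰ ((z : Kˣ) : K)) = 0) →
      ∃ u : Oˣ, algebraMap O K (u : O) = (z : K) := by
    intro z hz
    have hz0 : ((z : Kˣ) : K) ≠ 0 := z.ne_zero
    have hzs : spanSingleton O⁰ ((z : Kˣ) : K) ≠ 0 := by
      rw [Ne, spanSingleton_eq_zero_iff]; exact hz0
    have hone : spanSingleton O⁰ ((z : Kˣ) : K) = 1 := by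
      have h := finprod_heightOneSpectrum_factorization' K hzs
      rw [← h]
      have heq : ∀ v : HeightOneSpectrum O,
          (v.asIdeal : FractionalIdeal O⁰ K) ^
            (count K v (spanSingleton O⁰ ((z : Kˣ) : K))) = 1 := by
        intro v; rw [hz v, zpow_zero]
      rw [finprod_congr heq, finprod_one]
    have h1 : ((z : Kˣ) : K) ∈ (1 : FractionalIdeal O⁰ K) := by
      rw [← hone]; exact mem_spanSingleton_self _ _
    have h2 : (((z : Kˣ) : K))⁻¹ ∈ (1 : FractionalIdeal O⁰ K) := by
      have hinv : spanSingleton O⁰ (((z : Kˣ) : K))⁻¹ = 1 := by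
        rw [← spanSingleton_inv, hone, inv_one]
      rw [← hinv]; exact mem_spanSingleton_self _ _
    obtain ⟨a, ha⟩ := (mem_one_iff O⁰).mp h1
    obtain ⟨b, hb⟩ := (mem_one_iff O⁰).mp h2
    have hab : a * b = 1 := by
      apply IsFractionRing.injective O K
      rw [_root_.map_mul, ha, hb, _root_.map_one, mul_inv_cancel₀ hz0]
    exact ⟨⟨a, b, hab, by rwa [mul_comm] at hab⟩, ha⟩
  obtain ⟨u, hu⟩ := hmem x hcx
  -- the ideal (p) of O is proper
  have hppos : (p : ℚ_[p]) ≠ 0 := Nat.cast_ne_zero.mpr (Fact.out : p.Prime).ne_zero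
  have hptop : Ideal.span {(p : O)} ≠ ⊤ := by
    intro htop
    obtain ⟨t, ht⟩ := (Ideal.span_singleton_eq_top.mp htop).exists_right_inv
    have hpK0 : (p : K) ≠ 0 := Nat.cast_ne_zero.mpr (Fact.out : p.Prime).ne_zero
    have hpt : (p : K) * algebraMap O K t = 1 := by
      have h := congrArg (algebraMap O K) ht
      rwa [_root_.map_mul, map_natCast, _root_.map_one] at h
    have htq : algebraMap O K t = algebraMap ℚ_[p] K ((p : ℚ_[p])⁻¹) := by
      rw [map_inv₀, map_natCast]
      field_simp
      linear_combination hpt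
    have hint : IsIntegral ℤ_[p] ((p : ℚ_[p])⁻¹) := by
      have h1 : IsIntegral ℤ_[p] (algebraMap O K t) := by
        have h2 : IsIntegral ℤ_[p] ((t : K)) := t.2
        exact h2
      rw [htq] at h1
      exact (isIntegral_algebraMap_iff (algebraMap ℚ_[p] K).injective).mp h1
    obtain ⟨c, hcq⟩ := IsIntegrallyClosed.isIntegral_iff.mp hint
    have hpc : (p : ℤ_[p]) * c = 1 := by
      apply IsFractionRing.injective ℤ_[p] ℚ_[p]
      rw [_root_.map_mul, hcq, map_natCast, _root_.map_one, mul_inv_cancel₀ hppos]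
    have hup : IsUnit (p : ℤ_[p]) := IsUnit.of_mul_eq_one _ hpc
    rw [PadicInt.isUnit_iff, PadicInt.norm_p] at hup
    have h2 : (2 : ℝ) ≤ (p : ℝ) := by exact_mod_cast (Fact.out : p.Prime).two_le
    rw [inv_eq_one] at hup
    linarith
  -- modulo (p)^k, x is a power of order divisible by the group order, hence 1
  have hcong : ∀ k : ℕ, (u : O) - 1 ∈ Ideal.span {(p : O)} ^ k := by
    intro k
    haveI : Finite (O ⧸ (Ideal.span {(p : O)} ^ k)) := aux_finite_quot O k
    haveI : Fintype (O ⧸ (Ideal.span {(p : O)} ^ k))ˣ := Fintype.ofFinite _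
    set n : ℕ := Fintype.card (O ⧸ (Ideal.span {(p : O)} ^ k))ˣ with hn
    have hnpos : 0 < n := Fintype.card_pos
    obtain ⟨y, hy⟩ := key n hnpos
    have hcy : ∀ v : HeightOneSpectrum O,
        count K v (spanSingleton O⁰ ((y : Kˣ) : K)) = 0 := by
      intro v
      have h1 := hcx v
      rw [← hy, Units.val_pow_eq_pow_val, ← spanSingleton_pow, count_pow] at h1
      have hn0 : ((n : ℕ) : ℤ) ≠ 0 := by exact_mod_cast hnpos.ne'
      exact (mul_eq_zero.mp h1).resolve_left hn0
    obtain ⟨w, hw⟩ := hmem y hcy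
    have hwu : w ^ n = u := by
      apply Units.ext
      apply IsFractionRing.injective O K
      rw [hu, Units.val_pow_eq_pow_val, _root_.map_pow, hw, ← hy, Units.val_pow_eq_pow_val]
    have hπ : (Units.map (Ideal.Quotient.mk (Ideal.span {(p : O)} ^ k)).toMonoidHom) u = 1 := by
      rw [← hwu, _root_.map_pow, hn]
      exact pow_card_eq_one
    have hmk : Ideal.Quotient.mk (Ideal.span {(p : O)} ^ k) (u : O) = 1 := by
      have h := congrArg Units.val hπ
      simpa using h
    rw [← _root_.map_one (Ideal.Quotient.mk (Ideal.span {(p : O)} ^ k)),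
      Ideal.Quotient.eq] at hmk
    exact hmk
  -- Krull intersection theorem
  have hu1 : (u : O) = 1 := by
    have hbot : (⨅ k : ℕ, Ideal.span {(p : O)} ^ k) = ⊥ :=
      Ideal.iInf_pow_eq_bot_of_isDomain _ hptop
    have hmemi : (u : O) - 1 ∈ (⨅ k : ℕ, Ideal.span {(p : O)} ^ k) :=
      Submodule.mem_iInf _ |>.mpr hcong
    rw [hbot, Ideal.mem_bot, sub_eq_zero] at hmemi
    exact hmemi
  apply Units.ext
  rw [← hu, hu1, _root_.map_one, Units.val_one]
end

section
/- (Lemma 7) Let K be a finite extension of ℚ_p with normalized valuation v : K^× → ℤ, and let v̂ : K̂^× → Ẑ be the homomorphism induced by v on the completions, where K̂^× = lim_n K^×/(K^×)^n and Ẑ = lim_n ℤ/nℤ. Then an element α ∈ K̂^× lies in the image of the natural map K^× → K̂^× if and only if v̂(α) lies in the image of the natural map ℤ → Ẑ. -/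
/-- `K` acquires a `ℤ_[p]`-algebra structure via `ℤ_[p] → ℚ_[p] → K`. -/
noncomputable instance zpAlgebra (p : ℕ) [Fact p.Prime] (K : Type*) [Field K]
    [Algebra ℚ_[p] K] : Algebra ℤ_[p] K :=
  ((algebraMap ℚ_[p] K).comp (PadicInt.Coe.ringHom : ℤ_[p] →+* ℚ_[p])).toAlgebra

/-- `Ẑ = lim_n ℤ/nℤ`, realized as an additive subgroup of `Π n, ZMod n`. -/
def ZHat : AddSubgroup (Π n : ℕ+, ZMod (n : ℕ)) where
  carrier := { f | ∀ (m n : ℕ+) (h : (m : ℕ) ∣ (n : ℕ)),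
    ZMod.castHom h (ZMod (m : ℕ)) (f n) = f m }
  zero_mem' := by
    intro m n h
    simp only [Pi.zero_apply, map_zero]
  add_mem' := by
    intro a b ha hb m n h
    simp only [Pi.add_apply, map_add, ha m n h, hb m n h]
  neg_mem' := by
    intro a ha m n h
    simp only [Pi.neg_apply, map_neg, ha m n h]

/-- The natural map `ℤ → Ẑ`. -/
def toZHat : ℤ →+ ZHat where
  toFun k := ⟨fun n => (k : ZMod (n : ℕ)),
    fun m n h => map_intCast (ZMod.castHom h (ZMod (m : ℕ))) k⟩
  map_zero' := by
    apply Subtype.ext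
    funext n
    simp
  map_add' x y := by
    apply Subtype.ext
    funext n
    push_cast
    rfl

/-- The map `Kˣ/(Kˣ)ⁿ → ℤ/nℤ` induced by a valuation `v : Kˣ → ℤ`. -/
def valBar {K : Type*} [Field K] (v : Kˣ →* Multiplicative ℤ) (n : ℕ) :
    (Kˣ ⧸ powSubgroup Kˣ n) → ZMod n := fun q =>
  Quotient.liftOn' q (fun x => ((Multiplicative.toAdd (v x) : ℤ) : ZMod n))
    (by
      intro a b hab
      have h1 : a⁻¹ * b ∈ powSubgroup Kˣ n := QuotientGroup.leftRel_apply.mp hab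
      obtain ⟨y, hy⟩ := h1
      have hy' : y ^ n = a⁻¹ * b := hy
      have hb : b = a * y ^ n := by rw [hy', mul_inv_cancel_left]
      have hv : Multiplicative.toAdd (v b)
          = Multiplicative.toAdd (v a) + n • Multiplicative.toAdd (v y) := by
        rw [hb, map_mul, map_pow, toAdd_mul, toAdd_pow]
      show ((Multiplicative.toAdd (v a) : ℤ) : ZMod n)
          = ((Multiplicative.toAdd (v b) : ℤ) : ZMod n)
      rw [hv]
      push_cast [nsmul_eq_mul]
      simp [ZMod.natCast_self])

lemma valBar_comm {K : Type*} [Field K] (v : Kˣ →* Multiplicative ℤ) {m n : ℕ} (h : m ∣ n)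
    (q : Kˣ ⧸ powSubgroup Kˣ n) :
    ZMod.castHom h (ZMod m) (valBar v n q) = valBar v m (powTransition Kˣ h q) := by
  refine Quotient.inductionOn' q (fun x => ?_)
  have h1 : valBar v n (Quotient.mk'' x) = ((Multiplicative.toAdd (v x) : ℤ) : ZMod n) := rfl
  have h2 : powTransition Kˣ h (Quotient.mk'' x) = Quotient.mk'' x := rfl
  rw [h1, h2]
  exact map_intCast (ZMod.castHom h (ZMod m)) _

/-- The "completed valuation" `v̂ : K̂ˣ → Ẑ` induced by the valuation `v` on completions. -/
def valHat {K : Type*} [Field K] (v : Kˣ →* Multiplicative ℤ) : hatGroup Kˣ → ZHat :=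
  fun α => ⟨fun n => valBar v (n : ℕ) (α.1 n), by
    intro m n h
    rw [valBar_comm v h (α.1 n), α.2 m n h]⟩

/-- **Lemma 7.** Let `K` be a finite extension of `ℚ_p` with normalized
valuation `v : Kˣ → ℤ` (surjective, with the units of the ring of integers `R` being the
elements of valuation `0` and `R ∖ {0}` the elements of valuation `≥ 0`), and let
`v̂ : K̂ˣ → Ẑ` be the homomorphism induced by `v` on the completions.  Then `α ∈ K̂ˣ` lies
in the image of the natural map `Kˣ → K̂ˣ` if and only if `v̂ α` lies in the image of the
natural map `ℤ → Ẑ`. -/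
theorem mem_range_toHat_iff_valHat_mem_range_toZHat
    (p : ℕ) [Fact p.Prime] (K : Type*) [Field K] [Algebra ℚ_[p] K]
    [FiniteDimensional ℚ_[p] K] (v : Kˣ →* Multiplicative ℤ)
    (hv_surj : Function.Surjective v)
    (hv_unit : ∀ x : Kˣ, ((x : K) ∈ integralClosure ℤ_[p] K ∧
      ((x⁻¹ : Kˣ) : K) ∈ integralClosure ℤ_[p] K) ↔ Multiplicative.toAdd (v x) = 0)
    (hv_int : ∀ x : Kˣ, (x : K) ∈ integralClosure ℤ_[p] K ↔ 0 ≤ Multiplicative.toAdd (v x))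
    (α : hatGroup Kˣ) :
    α ∈ (toHatGroup Kˣ).range ↔ valHat v α ∈ (toZHat).range := by
  constructor
  · rintro ⟨x, rfl⟩
    exact ⟨Multiplicative.toAdd (v x), Subtype.ext (funext fun n => rfl)⟩
  · rintro ⟨k, hk⟩
    classical
    -- basic instances
    haveI : IsScalarTower ℤ_[p] ℚ_[p] K := IsScalarTower.of_algebraMap_eq fun x => rfl
    haveI : CharZero K := charZero_of_injective_algebraMap (algebraMap ℚ_[p] K).injective
    -- a topology on `K`
    let e := (Module.finBasis ℚ_[p] K).equivFun
    letI : NormedAddCommGroup K :=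
      NormedAddCommGroup.induced K (Fin (Module.finrank ℚ_[p] K) → ℚ_[p]) e.toLinearMap e.injective
    letI : NormedSpace ℚ_[p] K :=
      NormedSpace.induced ℚ_[p] K (Fin (Module.finrank ℚ_[p] K) → ℚ_[p]) e.toLinearMap
    haveI : ContinuousSMul ℤ_[p] K := by
      refine ⟨?_⟩
      have h : ∀ q : ℤ_[p] × K, q.1 • q.2 = ((q.1 : ℚ_[p]) • q.2) := fun q => by
        rw [Algebra.smul_def, Algebra.smul_def]; rfl
      have hc : Continuous fun q : ℤ_[p] × K => ((q.1 : ℚ_[p]) • q.2) :=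
        ((Isometry.continuous fun _ _ => rfl : Continuous ((↑) : ℤ_[p] → ℚ_[p])).comp continuous_fst).smul continuous_snd
      simpa only [h] using hc
    haveI : ContinuousMul K := by
      let M : K →ₗ[ℚ_[p]] (K →L[ℚ_[p]] K) :=
        (LinearMap.toContinuousLinearMap :
          (K →ₗ[ℚ_[p]] K) ≃ₗ[ℚ_[p]] (K →L[ℚ_[p]] K)).toLinearMap.comp (LinearMap.mul ℚ_[p] K)
      have hM : Continuous M := M.continuous_of_finiteDimensional
      refine ⟨?_⟩
      have hc : Continuous fun q : K × K => (M q.1) q.2 :=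
        (hM.comp continuous_fst).clm_apply continuous_snd
      have h : ∀ q : K × K, (M q.1) q.2 = q.1 * q.2 := fun q => by
        simp [M, LinearMap.mul_apply']
      simpa only [h] using hc
    -- the ring of integers is compact
    haveI : Module.Finite ℤ_[p] (integralClosure ℤ_[p] K) :=
      IsIntegralClosure.finite ℤ_[p] ℚ_[p] K (integralClosure ℤ_[p] K)
    obtain ⟨N, f, hf⟩ := Module.Finite.exists_fin' ℤ_[p] (integralClosure ℤ_[p] K)
    have hRccomp : IsCompact {a : K | a ∈ integralClosure ℤ_[p] K} := by
      let ψ : (Fin N → ℤ_[p]) →ₗ[ℤ_[p]] K :=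
        ((integralClosure ℤ_[p] K).val.toLinearMap).comp f
      have hψ : Continuous ψ := LinearMap.continuous_on_pi ψ
      have hr : Set.range ψ = {a : K | a ∈ integralClosure ℤ_[p] K} := by
        ext a
        constructor
        · rintro ⟨w, rfl⟩; exact (f w).2
        · intro ha
          obtain ⟨w, hw⟩ := hf ⟨a, ha⟩
          exact ⟨w, congrArg Subtype.val hw⟩
      rw [← hr]
      exact isCompact_range hψ
    -- the unit group of the ring of integers, as a subset of `K`
    set U : Set K := {a : K | a ∈ integralClosure ℤ_[p] K ∧
      ∃ b ∈ integralClosure ℤ_[p] K, a * b = 1} with hUdef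
    have hU_unit : ∀ u : Kˣ, ((u : K) ∈ U ↔ Multiplicative.toAdd (v u) = 0) := by
      intro u
      constructor
      · rintro ⟨hu, b, hb, hab⟩
        have hb' : b = ((u⁻¹ : Kˣ) : K) := by
          have : b = ((u : K))⁻¹ := eq_inv_of_mul_eq_one_right hab
          rw [this]; simp
        exact (hv_unit u).mp ⟨hu, hb' ▸ hb⟩
      · intro h
        obtain ⟨h1, h2⟩ := (hv_unit u).mpr h
        exact ⟨h1, ((u⁻¹ : Kˣ) : K), h2, by rw [← Units.val_mul, mul_inv_cancel, Units.val_one]⟩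
    have hUmul : ∀ a ∈ U, ∀ b ∈ U, a * b ∈ U := by
      rintro a ⟨ha, a', ha', haa⟩ b ⟨hb, b', hb', hbb⟩
      exact ⟨mul_mem ha hb, a' * b', mul_mem ha' hb',
        by rw [show a * b * (a' * b') = (a * a') * (b * b') by ring, haa, hbb, one_mul]⟩
    have hUpow : ∀ a ∈ U, ∀ j : ℕ, a ^ j ∈ U := by
      rintro a ⟨ha, a', ha', haa⟩ j
      exact ⟨pow_mem ha j, a' ^ j, pow_mem ha' j, by rw [← mul_pow, haa, one_pow]⟩
    have h1U : (1 : K) ∈ U := ⟨one_mem _, 1, one_mem _, one_mul 1⟩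
    have hUne0 : ∀ a ∈ U, a ≠ 0 := by
      rintro a ⟨-, b, -, hab⟩
      exact left_ne_zero_of_mul (hab ▸ one_ne_zero)
    have hUcomp : IsCompact U := by
      have hS : IsCompact (({a : K | a ∈ integralClosure ℤ_[p] K} ×ˢ
          {a : K | a ∈ integralClosure ℤ_[p] K}) ∩ {q : K × K | q.1 * q.2 = 1}) :=
        (hRccomp.prod hRccomp).inter_right
          (isClosed_eq (continuous_fst.mul continuous_snd) continuous_const)
      have hU : U = Prod.fst '' (({a : K | a ∈ integralClosure ℤ_[p] K} ×ˢ
          {a : K | a ∈ integralClosure ℤ_[p] K}) ∩ {q : K × K | q.1 * q.2 = 1}) := by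
        ext a
        constructor
        · rintro ⟨ha, b, hb, hab⟩
          exact ⟨(a, b), ⟨⟨ha, hb⟩, hab⟩, rfl⟩
        · rintro ⟨⟨a', b⟩, ⟨⟨ha, hb⟩, hab⟩, rfl⟩
          exact ⟨ha, b, hb, hab⟩
      rw [hU]
      exact hS.image continuous_fst
    -- choose representatives
    choose x hxmk using fun n : ℕ+ => QuotientGroup.mk_surjective (α.1 n)
    obtain ⟨π, hπ⟩ := hv_surj (Multiplicative.ofAdd 1)
    have hπ1 : Multiplicative.toAdd (v π) = 1 := by rw [hπ]; rfl
    have hvzpow : ∀ t : ℤ, Multiplicative.toAdd (v (π ^ t)) = t := by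
      intro t
      rw [map_zpow, toAdd_zpow, hπ1, smul_eq_mul, mul_one]
    have hm : ∀ n : ℕ+, ∃ c : ℤ, Multiplicative.toAdd (v (x n)) = k + (n : ℕ) * c := by
      intro n
      have h1 : ((k : ℤ) : ZMod (n : ℕ)) = ((Multiplicative.toAdd (v (x n)) : ℤ) : ZMod (n : ℕ)) := by
        calc ((k : ℤ) : ZMod (n : ℕ)) = (toZHat k).1 n := rfl
        _ = (valHat v α).1 n := by rw [hk]
        _ = valBar v (n : ℕ) (α.1 n) := rfl
        _ = valBar v (n : ℕ) (QuotientGroup.mk (x n)) := by rw [hxmk n]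
        _ = ((Multiplicative.toAdd (v (x n)) : ℤ) : ZMod (n : ℕ)) := rfl
      obtain ⟨c, hc⟩ := (ZMod.intCast_eq_intCast_iff _ _ _).mp h1 |>.dvd
      exact ⟨c, by linarith⟩
    choose m hm using hm
    -- unit-valuation representatives `y n` of `α.1 n` of valuation `k`
    set y : ℕ+ → Kˣ := fun n => x n * (π ^ (-(m n))) ^ (n : ℕ) with hydef
    have hy_mk : ∀ n : ℕ+, (QuotientGroup.mk (y n) : Kˣ ⧸ powSubgroup Kˣ (n : ℕ)) = α.1 n := by
      intro n
      have h1 : (QuotientGroup.mk (x n) : Kˣ ⧸ powSubgroup Kˣ (n : ℕ)) = QuotientGroup.mk (y n) := by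
        rw [QuotientGroup.eq]
        rw [hydef]
        rw [inv_mul_cancel_left]
        exact ⟨π ^ (-(m n)), rfl⟩
      rw [← h1, hxmk]
    have hvy : ∀ n : ℕ+, Multiplicative.toAdd (v (y n)) = k := by
      intro n
      have : Multiplicative.toAdd (v (y n)) =
          Multiplicative.toAdd (v (x n)) + (n : ℕ) • Multiplicative.toAdd (v (π ^ (-(m n)))) := by
        rw [hydef]
        simp only [map_mul, map_pow, toAdd_mul, toAdd_pow]
      rw [this, hvzpow, hm n, nsmul_eq_mul]
      ring
    -- the compact translated sets
    set C : ℕ+ → Set K := fun n =>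
      (fun a : K => ((y n : K) * ((π ^ (-k) : Kˣ) : K)) * a ^ (n : ℕ)) '' U with hCdef
    have hCne : ∀ n, (C n).Nonempty := fun n => ⟨_, ⟨1, h1U, rfl⟩⟩
    have hCcomp : ∀ n, IsCompact (C n) := fun n =>
      hUcomp.image (continuous_const.mul (continuous_pow (n : ℕ)))
    have hCclosed : ∀ n, IsClosed (C n) := fun n => (hCcomp n).isClosed
    have hCsub : ∀ m₀ n₀ : ℕ+, ((m₀ : ℕ) ∣ (n₀ : ℕ)) → C n₀ ⊆ C m₀ := by
      intro m₀ n₀ h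
      rintro - ⟨a, haU, rfl⟩
      obtain ⟨c, hc⟩ := id h
      -- relate `y n₀` and `y m₀`
      have h1 : (QuotientGroup.mk (y m₀) : Kˣ ⧸ powSubgroup Kˣ (m₀ : ℕ)) =
          QuotientGroup.mk (y n₀) := by
        have h2 := α.2 m₀ n₀ h
        rw [← hy_mk n₀, ← hy_mk m₀] at h2
        rw [← h2]
        rfl
      obtain ⟨t, ht⟩ := QuotientGroup.eq.mp h1
      have ht' : t ^ (m₀ : ℕ) = (y m₀)⁻¹ * (y n₀) := ht
      have hvt : Multiplicative.toAdd (v t) = 0 := by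
        have h3 : ((m₀ : ℕ) : ℤ) * Multiplicative.toAdd (v t) = 0 := by
          have := congrArg (fun u => Multiplicative.toAdd (v u)) ht'
          simp only [map_pow, map_mul, map_inv, toAdd_pow, toAdd_mul, toAdd_inv,
            nsmul_eq_mul] at this
          rw [this, hvy, hvy]
          ring
        rcases mul_eq_zero.mp h3 with h4 | h4
        · exact absurd h4 (by exact_mod_cast m₀.ne_zero)
        · exact h4
      have hyrel : y n₀ = y m₀ * t ^ (m₀ : ℕ) := by
        rw [ht', mul_inv_cancel_left]
      refine ⟨(t : K) * a ^ c, hUmul _ ((hU_unit t).mpr hvt) _ (hUpow a haU c), ?_⟩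
      show (y m₀ : K) * ((π ^ (-k) : Kˣ) : K) * ((t : K) * a ^ c) ^ (m₀ : ℕ) =
        (y n₀ : K) * ((π ^ (-k) : Kˣ) : K) * a ^ (n₀ : ℕ)
      have hyK : (y n₀ : K) = (y m₀ : K) * (t : K) ^ (m₀ : ℕ) := by
        rw [hyrel]; simp
      rw [hyK, mul_pow, hc, mul_comm (m₀ : ℕ) c, pow_mul]
      ring
    have hCdir : Directed (· ⊇ ·) C := by
      intro a b
      refine ⟨a * b, hCsub a (a * b) ?_, hCsub b (a * b) ?_⟩
      · rw [PNat.mul_coe]; exact dvd_mul_right _ _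
      · rw [PNat.mul_coe]; exact dvd_mul_left _ _
    obtain ⟨z, hz⟩ := IsCompact.nonempty_iInter_of_directed_nonempty_isCompact_isClosed
      C hCdir hCne hCcomp hCclosed
    rw [Set.mem_iInter] at hz
    have hz0 : z ≠ 0 := by
      obtain ⟨a, haU, hae⟩ := hz 1
      rw [← hae]
      exact mul_ne_zero (mul_ne_zero (Units.ne_zero _) (Units.ne_zero _))
        (pow_ne_zero _ (hUne0 a haU))
    refine ⟨Units.mk0 z hz0 * π ^ k, ?_⟩
    apply Subtype.ext
    funext n
    show (QuotientGroup.mk (Units.mk0 z hz0 * π ^ k) : Kˣ ⧸ powSubgroup Kˣ (n : ℕ)) = α.1 n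
    obtain ⟨a, haU, hae⟩ := hz n
    have ha0 : a ≠ 0 := hUne0 a haU
    set ω : Kˣ := Units.mk0 a ha0 with hωdef
    have hπcancel : ((π ^ (-k) : Kˣ) : K) * ((π ^ k : Kˣ) : K) = 1 := by
      rw [← Units.val_mul, ← zpow_add, neg_add_cancel, zpow_zero, Units.val_one]
    have hζeq : Units.mk0 z hz0 * π ^ k = y n * ω ^ (n : ℕ) := by
      apply Units.ext
      show z * ((π ^ k : Kˣ) : K) = ((y n * ω ^ (n : ℕ) : Kˣ) : K)
      rw [← hae]
      calc (y n : K) * ((π ^ (-k) : Kˣ) : K) * a ^ (n : ℕ) * ((π ^ k : Kˣ) : K)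
          = (y n : K) * a ^ (n : ℕ) * (((π ^ (-k) : Kˣ) : K) * ((π ^ k : Kˣ) : K)) := by ring
        _ = (y n : K) * a ^ (n : ℕ) := by rw [hπcancel, mul_one]
        _ = ((y n * ω ^ (n : ℕ) : Kˣ) : K) := by rw [hωdef]; simp
    rw [hζeq, ← hy_mk n]
    symm
    rw [QuotientGroup.eq, inv_mul_cancel_left]
    exact ⟨ω, rfl⟩
end

section
/- Let K be a finite extension of ℚ_p with normalized valuation v : K^× → ℤ, and let q₁, q₂, q₃ ∈ K^× with v(qᵢ) > 0 for i = 1, 2, 3. Suppose there exist two ℤ-linearly independent vectors (m₁, m₂, m₃) and (n₁, n₂, n₃) in ℤ³ with q₁^{m₁} q₂^{m₂} q₃^{m₃} = 1 and q₁^{n₁} q₂^{n₂} q₃^{n₃} = 1. Then for every pair of distinct indices i, j ∈ {1, 2, 3} there exist integers a and b, both nonzero, such that qᵢ^a · q_j^b = 1. -/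
lemma val_zpow_eq_zero {G : Type*} [CommGroup G] (w : G →* Multiplicative ℤ)
    (y : G) (hy : 0 < (w y).toAdd) (c : ℤ) (h : y ^ c = 1) : c = 0 := by
  have h' := congrArg (fun g => (w g).toAdd) h
  simp only [map_zpow, toAdd_zpow, smul_eq_mul, map_one, toAdd_one] at h'
  rcases mul_eq_zero.mp h' with h | h
  · exact h
  · omega

lemma helper_pair {G : Type*} [CommGroup G] (w : G →* Multiplicative ℤ)
    (x y z : G) (hx : 0 < (w x).toAdd) (hy : 0 < (w y).toAdd)
    (m0 m1 m2 n0 n1 n2 : ℤ)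
    (hindep : ∀ a b : ℤ, a * m0 + b * n0 = 0 → a * m1 + b * n1 = 0 →
      a * m2 + b * n2 = 0 → a = 0 ∧ b = 0)
    (hm : x ^ m0 * y ^ m1 * z ^ m2 = 1) (hn : x ^ n0 * y ^ n1 * z ^ n2 = 1) :
    ∃ a b : ℤ, a ≠ 0 ∧ b ≠ 0 ∧ x ^ a * y ^ b = 1 := by
  set A := m0 * n2 - n0 * m2 with hA
  set B := m1 * n2 - n1 * m2 with hB
  have h1 : x ^ (m0 * n2) * y ^ (m1 * n2) * z ^ (m2 * n2) = 1 := by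
    have := congrArg (· ^ n2) hm
    simpa [mul_zpow, ← zpow_mul] using this
  have h2 : x ^ (n0 * m2) * y ^ (n1 * m2) * z ^ (n2 * m2) = 1 := by
    have := congrArg (· ^ m2) hn
    simpa [mul_zpow, ← zpow_mul] using this
  have h1' : x ^ A * y ^ B * (x ^ (n0 * m2) * y ^ (n1 * m2) * z ^ (n2 * m2)) = 1 := by
    rw [← h1, show m0 * n2 = A + n0 * m2 by ring, show m1 * n2 = B + n1 * m2 by ring,
      show m2 * n2 = n2 * m2 by ring, zpow_add, zpow_add]
    ac_rfl
  have h3 : x ^ A * y ^ B = 1 := by rwa [h2, mul_one] at h1'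
  by_cases hc0 : A = 0
  · have hc1 : B = 0 := by
      rw [hc0, zpow_zero, one_mul] at h3
      exact val_zpow_eq_zero w y hy B h3
    have h20 := hindep n2 (-m2) (by rw [hA] at hc0; linarith) (by rw [hB] at hc1; linarith)
      (by ring)
    obtain ⟨hn2, hm2⟩ : n2 = 0 ∧ m2 = 0 := ⟨h20.1, by omega⟩
    rw [hm2, zpow_zero, mul_one] at hm
    have hm0 : m0 ≠ 0 := by
      intro h0
      rw [h0, zpow_zero, one_mul] at hm
      have hm1 := val_zpow_eq_zero w y hy m1 hm
      have := hindep 1 0 (by simp [h0]) (by simp [hm1]) (by simp [hm2])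
      omega
    have hm1 : m1 ≠ 0 := by
      intro h1''
      rw [h1'', zpow_zero, mul_one] at hm
      exact hm0 (val_zpow_eq_zero w x hx m0 hm)
    exact ⟨m0, m1, hm0, hm1, hm⟩
  · have hc1 : B ≠ 0 := by
      intro h1''
      rw [h1'', zpow_zero, mul_one] at h3
      exact hc0 (val_zpow_eq_zero w x hx A h3)
    exact ⟨A, B, hc0, hc1, h3⟩

/-- Let `K` be a finite extension of `ℚ_p` with normalized valuation
`v : Kˣ → ℤ`, and let `q 0, q 1, q 2 ∈ Kˣ` with `v (q i) > 0`.  Suppose there exist two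
`ℤ`-linearly independent vectors `m` and `n` in `ℤ³` giving multiplicative relations
`∏ i, (q i) ^ (m i) = 1` and `∏ i, (q i) ^ (n i) = 1`.  Then for every pair of distinct
indices `i, j` there exist nonzero integers `a` and `b` with `(q i) ^ a * (q j) ^ b = 1`. -/
theorem pairwise_relations_of_two_independent_relations
    (p : ℕ) [Fact p.Prime] (K : Type*) [Field K] [Algebra ℚ_[p] K]
    [FiniteDimensional ℚ_[p] K] (v : Kˣ →* Multiplicative ℤ)
    (hv_surj : Function.Surjective v)
    (hv_unit : ∀ x : Kˣ, ((x : K) ∈ integralClosure ℤ_[p] K ∧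
      ((x⁻¹ : Kˣ) : K) ∈ integralClosure ℤ_[p] K) ↔ Multiplicative.toAdd (v x) = 0)
    (hv_int : ∀ x : Kˣ, (x : K) ∈ integralClosure ℤ_[p] K ↔ 0 ≤ Multiplicative.toAdd (v x))
    (q : Fin 3 → Kˣ) (hq : ∀ i, 0 < Multiplicative.toAdd (v (q i)))
    (m n : Fin 3 → ℤ)
    (hindep : ∀ a b : ℤ, (∀ i, a * m i + b * n i = 0) → a = 0 ∧ b = 0)
    (hm : (q 0) ^ (m 0) * (q 1) ^ (m 1) * (q 2) ^ (m 2) = 1)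
    (hn : (q 0) ^ (n 0) * (q 1) ^ (n 1) * (q 2) ^ (n 2) = 1) :
    ∀ i j : Fin 3, i ≠ j → ∃ a b : ℤ, a ≠ 0 ∧ b ≠ 0 ∧ (q i) ^ a * (q j) ^ b = 1 := by
  have key : ∀ a b : ℤ, a * m 0 + b * n 0 = 0 → a * m 1 + b * n 1 = 0 →
      a * m 2 + b * n 2 = 0 → a = 0 ∧ b = 0 := fun a b e0 e1 e2 =>
    hindep a b (fun t => by fin_cases t <;> assumption)
  intro i j hij
  fin_cases i <;> fin_cases j <;> first
  | exact absurd rfl hij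
  | exact helper_pair v (q 0) (q 1) (q 2) (hq 0) (hq 1) (m 0) (m 1) (m 2) (n 0) (n 1) (n 2)
      key hm hn
  | exact helper_pair v (q 0) (q 2) (q 1) (hq 0) (hq 2) (m 0) (m 2) (m 1) (n 0) (n 2) (n 1)
      (fun a b e0 e1 e2 => key a b e0 e2 e1) (by rw [← hm]; ac_rfl) (by rw [← hn]; ac_rfl)
  | exact helper_pair v (q 1) (q 0) (q 2) (hq 1) (hq 0) (m 1) (m 0) (m 2) (n 1) (n 0) (n 2)
      (fun a b e0 e1 e2 => key a b e1 e0 e2) (by rw [← hm]; ac_rfl) (by rw [← hn]; ac_rfl)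
  | exact helper_pair v (q 1) (q 2) (q 0) (hq 1) (hq 2) (m 1) (m 2) (m 0) (n 1) (n 2) (n 0)
      (fun a b e0 e1 e2 => key a b e2 e0 e1) (by rw [← hm]; ac_rfl) (by rw [← hn]; ac_rfl)
  | exact helper_pair v (q 2) (q 0) (q 1) (hq 2) (hq 0) (m 2) (m 0) (m 1) (n 2) (n 0) (n 1)
      (fun a b e0 e1 e2 => key a b e1 e2 e0) (by rw [← hm]; ac_rfl) (by rw [← hn]; ac_rfl)
  | exact helper_pair v (q 2) (q 1) (q 0) (hq 2) (hq 1) (m 2) (m 1) (m 0) (n 2) (n 1) (n 0)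
      (fun a b e0 e1 e2 => key a b e2 e1 e0) (by rw [← hm]; ac_rfl) (by rw [← hn]; ac_rfl)
end
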